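/- arXiv:2302.09968 — 3 statements merged into one kernel-verified Lean document; each statement's English description precedes it below -/
import Mathlib

section
/- Let f(ε,t) be a family of functions, U a neighbourhood of 0 in ℂ, such that ε ↦ f(ε,t) is analytic in U for all t > 0 and |f(ε,t)| ≤ C min(1, t^{−(α+βε)}) for all t > 0 and real ε ∈ U, where C > 0, α ≤ 1, β ∈ ℝ. Then as ε → 0 (ε real, nonzero), ∫₀^∞ e^{−ε²t} f(ε,t) dt = O(|ε|^{2α−2}) if α < 1, and O(log|ε|) if α = 1. -/
/-!
Split the integral at `t = 1`. On `(0, 1]` the integrand is bounded by `C`. For `t ≥ 1` the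
`ε`-dependent part of the exponent is absorbed by half of the Gaussian-type damping:
`|β ε| log t ≤ 2 |β| |ε| √t ≤ 2 β² + ε² t / 2`, so the integrand is at most
`C e^{2β²} t^{-α} e^{-ε² t / 2}`. What remains is an incomplete Gamma integral
`∫₁^∞ t^{-α} e^{-b t} dt` with `b = ε² / 2`, which is at most `b^{α-1} Γ(1-α)` when
`α < 1` and at most `1 - log b` when `α = 1` (split at `t = 1 / b`).
-/

open Real MeasureTheory Set Filter Asymptotics Topology

lemma rpow_mul_le_exp {t : ℝ} (ht : 1 ≤ t) (b e : ℝ) :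
    t ^ (b * e) ≤ exp (2 * b ^ 2 + e ^ 2 * t / 2) := by
  have ht0 : 0 < t := by linarith
  have hlog : log t ≤ 2 * √t := by
    simpa [sqrt_eq_rpow, div_eq_mul_inv, mul_comm] using log_le_rpow_div ht0.le one_half_pos
  rw [rpow_def_of_pos ht0, exp_le_exp]
  calc log t * (b * e) ≤ log t * (|b| * |e|) := by
        rw [← abs_mul]; exact mul_le_mul_of_nonneg_left (le_abs_self _) (log_nonneg ht)
    _ ≤ 2 * √t * (|b| * |e|) := by gcongr
    _ ≤ 2 * b ^ 2 + e ^ 2 * t / 2 := by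
        nlinarith [sq_nonneg (2 * |b| - |e| * √t), sq_abs b, sq_abs e, sq_sqrt ht0.le]

lemma integrableOn_rpow_mul_exp_neg_mul_Ioi_one (a : ℝ) {b : ℝ} (hb : 0 < b) :
    IntegrableOn (fun t : ℝ => t ^ a * exp (-(b * t))) (Ioi 1) := by
  refine integrable_of_isBigO_exp_neg (half_pos hb) ?_ ?_
  · exact (continuousOn_id.rpow_const fun _ hx => Or.inl (zero_lt_one.trans_le hx).ne').mul
      (by fun_prop)
  · refine ((isLittleO_rpow_exp_pos_mul_atTop a (half_pos hb)).isBigO.mul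
      (isBigO_refl (fun t : ℝ => exp (-(b * t))) atTop)).congr_right fun t => ?_
    rw [← exp_add]; ring_nf

lemma integrableOn_ite_le_one (C : ℝ) {φ : ℝ → ℝ} (hφ : IntegrableOn φ (Ioi 1)) :
    IntegrableOn (fun t => if t ≤ 1 then C else φ t) (Ioi 0) := by
  rw [← Ioc_union_Ioi_eq_Ioi zero_le_one]
  refine IntegrableOn.union ?_ ?_
  · exact (integrableOn_const measure_Ioc_lt_top.ne).congr_fun
      (fun t ht => (if_pos ht.2).symm) measurableSet_Ioc
  · exact hφ.congr_fun (fun t ht => (if_neg (not_le.2 ht.out)).symm) measurableSet_Ioi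

lemma setIntegral_ite_le_one (C : ℝ) {φ : ℝ → ℝ} (hφ : IntegrableOn φ (Ioi 1)) :
    ∫ t in Ioi 0, (if t ≤ 1 then C else φ t) = C + ∫ t in Ioi 1, φ t := by
  have hint := integrableOn_ite_le_one C hφ
  rw [← Ioc_union_Ioi_eq_Ioi zero_le_one] at hint ⊢
  rw [setIntegral_union (Ioc_disjoint_Ioi le_rfl) measurableSet_Ioi
    (hint.mono_set subset_union_left) (hint.mono_set subset_union_right),
    setIntegral_congr_fun measurableSet_Ioc (fun t ht => if_pos ht.2),
    setIntegral_congr_fun measurableSet_Ioi (fun t ht => if_neg (not_le.2 ht.out))]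
  simp

lemma isBigO_const_of_tendsto_norm_atTop {α : Type*} {l : Filter α} {f : α → ℝ} (c : ℝ)
    (hf : Tendsto (fun x => ‖f x‖) l atTop) : (fun _ => c) =O[l] f :=
  (isBigO_const_one ℝ c l).trans ((isLittleO_one_left_iff ℝ).2 hf).isBigO

lemma tendsto_norm_log_abs_nhdsNE_zero :
    Tendsto (fun ε : ℝ => ‖log |ε|‖) (𝓝[≠] 0) atTop := by
  simpa [Function.comp_def] using tendsto_abs_atBot_atTop.comp tendsto_log_nhdsNE_zero

lemma tendsto_norm_abs_rpow_nhdsNE_zero {r : ℝ} (hr : r < 0) :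
    Tendsto (fun ε : ℝ => ‖|ε| ^ r‖) (𝓝[≠] 0) atTop :=
  ((tendsto_rpow_neg_nhdsGT_zero hr).comp tendsto_abs_nhdsNE_zero).congr fun ε =>
    (norm_of_nonneg (rpow_nonneg (abs_nonneg ε) r)).symm

/-- `tailIntegral a b = b ^ (a - 1) * Γ(1 - a, b)`, where `Γ(s, x)` is the upper incomplete
Gamma function. -/
noncomputable def tailIntegral (a b : ℝ) : ℝ := ∫ t in Ioi 1, t ^ (-a) * exp (-(b * t))

lemma tailIntegral_nonneg (a b : ℝ) : 0 ≤ tailIntegral a b :=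
  setIntegral_nonneg measurableSet_Ioi fun _ ht =>
    mul_nonneg (rpow_nonneg (zero_le_one.trans ht.out.le) _) (exp_pos _).le

lemma tailIntegral_le_Gamma {a b : ℝ} (ha : a < 1) (hb : 0 < b) :
    tailIntegral a b ≤ (1 / b) ^ (1 - a) * Gamma (1 - a) := by
  have hGamma := integral_rpow_mul_exp_neg_mul_Ioi (by linarith : 0 < 1 - a) hb
  simp only [sub_sub_cancel_left] at hGamma
  rw [← hGamma]
  refine setIntegral_mono_set ?_ ?_ (Ioi_subset_Ioi zero_le_one).eventuallyLE
  · exact Integrable.of_integral_ne_zero (by rw [hGamma]; positivity)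
  · filter_upwards [ae_restrict_mem measurableSet_Ioi] with t ht
    exact mul_nonneg (rpow_nonneg (le_of_lt ht) _) (exp_pos _).le

lemma tailIntegral_one_le {b : ℝ} (hb0 : 0 < b) (hb1 : b ≤ 1) :
    tailIntegral 1 b ≤ 1 - log b := by
  have hT : 1 ≤ 1 / b := by rw [le_div_iff₀ hb0]; linarith
  have hint := integrableOn_rpow_mul_exp_neg_mul_Ioi_one (-1) hb0
  have hnear : ∫ t in Ioc 1 (1 / b), t ^ (-(1:ℝ)) * exp (-(b * t)) ≤ -log b := by
    calc ∫ t in Ioc 1 (1 / b), t ^ (-(1:ℝ)) * exp (-(b * t))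
        ≤ ∫ t in Ioc 1 (1 / b), t⁻¹ := by
          refine setIntegral_mono_on (hint.mono_set Ioc_subset_Ioi_self) ?_ measurableSet_Ioc
            fun t ht => ?_
          · exact (intervalIntegrable_iff_integrableOn_Ioc_of_le hT).1
              (intervalIntegrable_inv_iff.2 (Or.inr fun h => by
                rw [uIcc_of_le hT] at h; exact absurd h.1 (by norm_num)))
          · rw [rpow_neg_one]
            exact mul_le_of_le_one_right (inv_nonneg.2 (by linarith [ht.1]))
              (exp_le_one_iff.2 (neg_nonpos.2 (mul_nonneg hb0.le (by linarith [ht.1]))))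
      _ = -log b := by
          rw [← intervalIntegral.integral_of_le hT, integral_inv_of_pos one_pos (by positivity)]
          simp
  have hfar : ∫ t in Ioi (1 / b), t ^ (-(1:ℝ)) * exp (-(b * t)) ≤ 1 := by
    calc ∫ t in Ioi (1 / b), t ^ (-(1:ℝ)) * exp (-(b * t))
        ≤ ∫ t in Ioi (1 / b), b * exp (-b * t) := by
          refine setIntegral_mono_on (hint.mono_set (Ioi_subset_Ioi hT))
            ((exp_neg_integrableOn_Ioi _ hb0).const_mul b) measurableSet_Ioi fun t ht => ?_
          rw [rpow_neg_one, neg_mul]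
          gcongr
          exact inv_le_of_inv_le₀ hb0 (by rw [← one_div]; exact ht.out.le)
      _ = exp (-1) := by
          rw [integral_const_mul, integral_exp_mul_Ioi (neg_lt_zero.2 hb0)]
          field_simp
      _ ≤ 1 := exp_le_one_iff.2 (by norm_num)
  rw [tailIntegral, ← Ioc_union_Ioi_eq_Ioi hT, setIntegral_union (Ioc_disjoint_Ioi le_rfl)
    measurableSet_Ioi (hint.mono_set Ioc_subset_Ioi_self) (hint.mono_set (Ioi_subset_Ioi hT))]
  linarith

lemma isBigO_tailIntegral_rpow {a : ℝ} (ha : a < 1) :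
    (fun ε : ℝ => tailIntegral a (ε ^ 2 / 2)) =O[𝓝[≠] 0] fun ε => |ε| ^ (2 * a - 2) := by
  refine IsBigO.of_bound (2 ^ (1 - a) * Gamma (1 - a)) ?_
  filter_upwards [self_mem_nhdsWithin] with ε hε
  have hε : ε ≠ 0 := hε
  rw [norm_of_nonneg (tailIntegral_nonneg _ _), norm_of_nonneg (by positivity)]
  refine (tailIntegral_le_Gamma ha (by positivity)).trans_eq ?_
  rw [show 1 / (ε ^ 2 / 2) = 2 * (|ε| ^ (2 : ℝ))⁻¹ by rw [rpow_two, sq_abs]; field_simp,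
    mul_rpow zero_le_two (by positivity), inv_rpow (by positivity), ← rpow_neg (by positivity),
    ← rpow_mul (abs_nonneg ε)]
  ring_nf

lemma isBigO_tailIntegral_one_log :
    (fun ε : ℝ => tailIntegral 1 (ε ^ 2 / 2)) =O[𝓝[≠] 0] fun ε => log |ε| := by
  have hsmall : ∀ᶠ ε : ℝ in 𝓝[≠] 0, ε ^ 2 / 2 ≤ 1 := nhdsWithin_le_nhds <|
    (((continuous_pow 2).div_const 2).tendsto' 0 0 (by simp)).eventually (ge_mem_nhds one_pos)
  have hle : (fun ε : ℝ => tailIntegral 1 (ε ^ 2 / 2)) =O[𝓝[≠] 0]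
      fun ε => (1 + log 2) - 2 * log |ε| := by
    refine IsBigO.of_bound 1 ?_
    filter_upwards [self_mem_nhdsWithin, hsmall] with ε hε hε1
    have hε : ε ≠ 0 := hε
    rw [one_mul, norm_of_nonneg (tailIntegral_nonneg _ _)]
    refine (tailIntegral_one_le (by positivity) hε1).trans (le_of_eq_of_le ?_ (le_norm_self _))
    rw [log_div (by positivity) two_ne_zero, ← sq_abs, log_pow]
    ring
  exact hle.trans ((isBigO_const_of_tendsto_norm_atTop _ tendsto_norm_log_abs_nhdsNE_zero).sub
    ((isBigO_refl _ _).const_mul_left 2))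

section

variable {E : Type*} [NormedAddCommGroup E] [NormedSpace ℝ E]

lemma norm_exp_smul_le {g : ℝ → E} {C a c ε t : ℝ}
    (hg : ∀ t, 0 < t → ‖g t‖ ≤ C * min 1 (t ^ (-(a + c * ε)))) (ht : 0 < t) :
    ‖exp (-ε ^ 2 * t) • g t‖ ≤
      if t ≤ 1 then C else C * exp (2 * c ^ 2) * (t ^ (-a) * exp (-(ε ^ 2 / 2 * t))) := by
  have hC : 0 ≤ C := by simpa using (norm_nonneg _).trans (hg 1 one_pos)
  rw [norm_smul, norm_of_nonneg (exp_pos _).le]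
  split_ifs with ht1
  · calc exp (-ε ^ 2 * t) * ‖g t‖ ≤ 1 * C := by
          gcongr
          · exact exp_le_one_iff.2 (by nlinarith [sq_nonneg ε])
          · exact (hg t ht).trans (mul_le_of_le_one_right hC (min_le_left _ _))
      _ = C := one_mul C
  · have ht1 : 1 ≤ t := (not_le.1 ht1).le
    calc exp (-ε ^ 2 * t) * ‖g t‖
        ≤ exp (-ε ^ 2 * t) * (C * (t ^ (-a) * t ^ (-c * ε))) := by
          rw [← rpow_add ht, show -a + -c * ε = -(a + c * ε) by ring]
          gcongr
          exact (hg t ht).trans (mul_le_mul_of_nonneg_left (min_le_right _ _) hC)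
      _ ≤ exp (-ε ^ 2 * t) * (C * (t ^ (-a) * exp (2 * (-c) ^ 2 + ε ^ 2 * t / 2))) := by
          gcongr
          exact rpow_mul_le_exp ht1 _ _
      _ = C * exp (2 * c ^ 2) * (t ^ (-a) * exp (-(ε ^ 2 / 2 * t))) := by
          rw [show -(ε ^ 2 / 2 * t) = -ε ^ 2 * t + ε ^ 2 * t / 2 by ring, exp_add, exp_add,
            neg_sq]
          ring

lemma norm_setIntegral_exp_smul_le {g : ℝ → E} {C a c ε : ℝ} (hε : ε ≠ 0)
    (hg : ∀ t, 0 < t → ‖g t‖ ≤ C * min 1 (t ^ (-(a + c * ε)))) :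
    ‖∫ t in Ioi 0, exp (-ε ^ 2 * t) • g t‖ ≤
      C + C * exp (2 * c ^ 2) * tailIntegral a (ε ^ 2 / 2) := by
  have htail := (integrableOn_rpow_mul_exp_neg_mul_Ioi_one (-a)
    (by positivity : 0 < ε ^ 2 / 2)).const_mul (C * exp (2 * c ^ 2))
  rw [tailIntegral, ← integral_const_mul, ← setIntegral_ite_le_one C htail]
  -- no measurability of `g` is needed: the Bochner integral of a non-integrable function is `0`
  refine (norm_integral_le_integral_norm _).trans (integral_mono_of_nonneg
    (Eventually.of_forall fun t => norm_nonneg _) (integrableOn_ite_le_one C htail) ?_)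
  filter_upwards [ae_restrict_mem measurableSet_Ioi] with t ht
  exact norm_exp_smul_le hg ht

lemma isBigO_setIntegral_exp_smul {f : ℂ → ℝ → E} {U : Set ℂ} (hU : U ∈ 𝓝 (0 : ℂ))
    {C α β : ℝ}
    (hbound : ∀ (ε : ℝ) (t : ℝ), (ε : ℂ) ∈ U → 0 < t →
      ‖f ε t‖ ≤ C * min 1 (t ^ (-(α + β * ε)))) :
    (fun ε : ℝ => ∫ t in Ioi 0, exp (-ε ^ 2 * t) • f ε t) =O[𝓝[≠] 0]
      fun ε => C + C * exp (2 * β ^ 2) * tailIntegral α (ε ^ 2 / 2) := by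
  have hUε : ∀ᶠ ε : ℝ in 𝓝 0, (ε : ℂ) ∈ U :=
    Complex.continuous_ofReal.continuousAt.preimage_mem_nhds (by simpa using hU)
  refine IsBigO.of_bound 1 ?_
  filter_upwards [nhdsWithin_le_nhds hUε, self_mem_nhdsWithin] with ε hεU hε
  rw [one_mul]
  exact (norm_setIntegral_exp_smul_le hε (hbound ε · hεU)).trans (le_abs_self _)

end

theorem stmt_6_general (f : ℂ → ℝ → ℂ) (U : Set ℂ) (hU : U ∈ nhds (0:ℂ))
    (C α β : ℝ)
    (hbound : ∀ (ε : ℝ) (t : ℝ), (ε:ℂ) ∈ U → 0 < t →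
      ‖f ε t‖ ≤ C * min 1 (t ^ (-(α + β * ε)))) :
    (α < 1 →
      (fun ε : ℝ => ∫ t in Set.Ioi (0:ℝ), Real.exp (-ε ^ 2 * t) • f ε t)
        =O[nhdsWithin 0 {(0:ℝ)}ᶜ] fun ε : ℝ => |ε| ^ (2 * α - 2)) ∧
    (α = 1 →
      (fun ε : ℝ => ∫ t in Set.Ioi (0:ℝ), Real.exp (-ε ^ 2 * t) • f ε t)
        =O[nhdsWithin 0 {(0:ℝ)}ᶜ] fun ε : ℝ => Real.log |ε|) := by
  have hI := isBigO_setIntegral_exp_smul hU hbound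
  refine ⟨fun hα => hI.trans ?_, fun hα => hI.trans ?_⟩
  · exact (isBigO_const_of_tendsto_norm_atTop C
      (tendsto_norm_abs_rpow_nhdsNE_zero (by linarith))).add
      ((isBigO_tailIntegral_rpow hα).const_mul_left _)
  · subst hα
    exact (isBigO_const_of_tendsto_norm_atTop C tendsto_norm_log_abs_nhdsNE_zero).add
      (isBigO_tailIntegral_one_log.const_mul_left _)

theorem stmt_6 (f : ℂ → ℝ → ℂ) (U : Set ℂ) (hU : U ∈ nhds (0:ℂ))
    (C α β : ℝ) (hC : 0 < C) (hα : α ≤ 1)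
    (hanal : ∀ t : ℝ, 0 < t → AnalyticOn ℂ (fun ε => f ε t) U)
    (hmeas : ∀ ε : ℝ, (ε:ℂ) ∈ U → AEStronglyMeasurable (f ε) (volume.restrict (Set.Ioi 0)))
    (hbound : ∀ (ε : ℝ) (t : ℝ), (ε:ℂ) ∈ U → 0 < t →
      ‖f ε t‖ ≤ C * min 1 (t ^ (-(α + β * ε)))) :
    (α < 1 →
      (fun ε : ℝ => ∫ t in Set.Ioi (0:ℝ), Real.exp (-ε ^ 2 * t) • f ε t)
        =O[nhdsWithin 0 {(0:ℝ)}ᶜ] fun ε : ℝ => |ε| ^ (2 * α - 2)) ∧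
    (α = 1 →
      (fun ε : ℝ => ∫ t in Set.Ioi (0:ℝ), Real.exp (-ε ^ 2 * t) • f ε t)
        =O[nhdsWithin 0 {(0:ℝ)}ᶜ] fun ε : ℝ => Real.log |ε|) :=
  stmt_6_general f U hU C α β hbound
end

section
/- Let ω satisfy ω(z−a) = (αz+β)e^{−z} + O(e^{−(1+q)z}) as z → +∞ with α > 0, q > 0, and ω bounded with ω(z) → 1 as z → −∞. Then as ε ↗ 0 (ε ∈ (−1,0)), ∫_ℝ ω(z−a) e^{(1+ε)z} dz = α/ε² − β/ε + O(1). -/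
open Real MeasureTheory Set Filter Asymptotics

/-!
Fix `c ≥ max z₀ 0` and `ε ∈ (-1/2, 0)`. On `(-∞, c]` the integrand is at most `M e^{(1+ε)z}`, whose
integral is `O(1)` uniformly in `ε`. On `(c, ∞)`, replacing `ω (z - a)` by `(αz + β)e^{-z}` changes
the integrand by at most `C e^{(ε-q)z}`, whose integral is at most `C/q`. What is left,
`∫_c^∞ (αz + β)e^{εz}`, differs from `∫_0^∞ (αz + β)e^{εz} = α/ε² - β/ε` by the integral over
`(0, c]`, which is bounded by `(|α|c + |β|)c`.
-/

lemma tendsto_linear_mul_exp_atTop {ε : ℝ} (hε : ε < 0) (α β : ℝ) :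
    Tendsto (fun z => (α * z + β) * exp (ε * z)) atTop (nhds 0) := by
  have hlin : Tendsto (fun z => -ε * z) atTop atTop := tendsto_id.const_mul_atTop (by linarith)
  have hz : Tendsto (fun z => z * exp (ε * z)) atTop (nhds 0) := by
    have := ((tendsto_pow_mul_exp_neg_atTop_nhds_zero 1).comp hlin).const_mul (-ε)⁻¹
    rw [mul_zero] at this
    refine this.congr fun z => ?_
    simp only [Function.comp_apply, pow_one, neg_mul, neg_neg]
    field_simp [hε.ne]
  have hexp : Tendsto (fun z => exp (ε * z)) atTop (nhds 0) :=
    tendsto_exp_atBot.comp (tendsto_id.const_mul_atTop_of_neg hε)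
  simpa [add_mul, mul_assoc] using (hz.const_mul α).add (hexp.const_mul β)

lemma integrableOn_linear_mul_exp_Ioi {ε : ℝ} (hε : ε < 0) (α β c : ℝ) :
    IntegrableOn (fun z => (α * z + β) * exp (ε * z)) (Ioi c) := by
  refine integrable_of_isBigO_exp_neg (a := c) (b := -ε / 2) (by linarith) (by fun_prop) ?_
  have hbdd := (tendsto_linear_mul_exp_atTop (ε := ε / 2) (by linarith) α β).isBigO_one ℝ
  refine (hbdd.mul (isBigO_refl (fun z => exp (ε / 2 * z)) atTop)).congr (fun z => ?_) fun z => ?_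
  · rw [mul_assoc, ← exp_add]; ring_nf
  · rw [one_mul]; ring_nf

lemma integral_Ioi_zero_linear_mul_exp {ε : ℝ} (hε : ε < 0) (α β : ℝ) :
    ∫ z in Ioi 0, (α * z + β) * exp (ε * z) = α / ε ^ 2 - β / ε := by
  set F : ℝ → ℝ := fun z => ((α * z + β) / ε - α / ε ^ 2) * exp (ε * z)
  have hF : ∀ z ∈ Ici (0 : ℝ), HasDerivAt F ((α * z + β) * exp (ε * z)) z := by
    intro z _
    refine ((((((hasDerivAt_id z).const_mul α).add_const β).div_const ε).sub_const
      (α / ε ^ 2)).fun_mul ((hasDerivAt_id z).const_mul ε).exp).congr_deriv ?_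
    have := hε.ne
    simp only [id]
    field_simp
    ring
  have hF_lim : Tendsto F atTop (nhds 0) := by
    refine (tendsto_linear_mul_exp_atTop hε (α / ε) (β / ε - α / ε ^ 2)).congr fun z => ?_
    simp only [F]
    ring
  rw [integral_Ioi_of_hasDerivAt_of_tendsto' hF (integrableOn_linear_mul_exp_Ioi hε α β 0) hF_lim]
  simp [F]

lemma integral_sub_setIntegral_Ioi_eq {f g : ℝ → ℝ} {c : ℝ} (hc : 0 ≤ c)
    (hf : IntegrableOn f (Iic c)) (hfg : IntegrableOn (fun z => f z - g z) (Ioi c))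
    (hg : IntegrableOn g (Ioi 0)) :
    (∫ z, f z) - ∫ z in Ioi 0, g z
      = (∫ z in Iic c, f z) + (∫ z in Ioi c, (f z - g z)) - ∫ z in Ioc 0 c, g z := by
  have hg_Ioi : IntegrableOn g (Ioi c) := hg.mono_set (Ioi_subset_Ioi hc)
  have hf_Ioi : IntegrableOn f (Ioi c) :=
    (hfg.add hg_Ioi).congr_fun (fun z _ => by simp) measurableSet_Ioi
  rw [← intervalIntegral.integral_Iic_add_Ioi hf hf_Ioi, ← Ioc_union_Ioi_eq_Ioi hc,
    setIntegral_union (Ioc_disjoint_Ioi le_rfl) measurableSet_Ioi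
      (hg.mono_set Ioc_subset_Ioi_self) hg_Ioi, integral_sub hf_Ioi hg_Ioi]
  ring

lemma abs_setIntegral_le_mul_setIntegral_exp {h : ℝ → ℝ} {s : Set ℝ} {K b : ℝ}
    (hs : MeasurableSet s) (hexp : IntegrableOn (fun z => exp (b * z)) s)
    (hh : ∀ z ∈ s, |h z| ≤ K * exp (b * z)) :
    |∫ z in s, h z| ≤ K * ∫ z in s, exp (b * z) := by
  rw [← integral_const_mul]
  exact norm_integral_le_of_norm_le (hexp.const_mul K)
    (ae_restrict_of_forall_mem hs fun z hz => (norm_eq_abs _).trans_le (hh z hz))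

lemma abs_setIntegral_Ioc_linear_mul_exp_le {ε : ℝ} (hε : ε ≤ 0) (α β : ℝ) {c : ℝ}
    (hc : 0 ≤ c) : |∫ z in Ioc 0 c, (α * z + β) * exp (ε * z)| ≤ (|α| * c + |β|) * c := by
  have hbound : ∀ z ∈ Ioc 0 c, ‖(α * z + β) * exp (ε * z)‖ ≤ |α| * c + |β| := by
    rintro z ⟨hz₀, hzc⟩
    have hexp : exp (ε * z) ≤ 1 := exp_le_one_iff.2 (mul_nonpos_of_nonpos_of_nonneg hε hz₀.le)
    have hlin : |α * z + β| ≤ |α| * c + |β| := by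
      refine (abs_add_le _ _).trans (add_le_add_left ?_ _)
      rw [abs_mul, abs_of_pos hz₀]
      exact mul_le_mul_of_nonneg_left hzc (abs_nonneg α)
    rw [norm_mul, norm_of_nonneg (exp_pos _).le]
    exact (mul_le_of_le_one_right (abs_nonneg _) hexp).trans hlin
  have := norm_setIntegral_le_of_norm_le_const (μ := volume) measure_Ioc_lt_top hbound
  rwa [measureReal_def, volume_Ioc, ENNReal.toReal_ofReal (by linarith), sub_zero,
    norm_eq_abs] at this

lemma abs_mul_exp_sub_linear_mul_exp_le {u α β q C ε z : ℝ}
    (h : |u - (α * z + β) * exp (-z)| ≤ C * exp (-(1 + q) * z)) :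
    |u * exp ((1 + ε) * z) - (α * z + β) * exp (ε * z)| ≤ C * exp ((ε - q) * z) := by
  have hfactor : u * exp ((1 + ε) * z) - (α * z + β) * exp (ε * z)
      = (u - (α * z + β) * exp (-z)) * exp ((1 + ε) * z) := by
    simp only [sub_mul, mul_assoc, ← exp_add]
    ring_nf
  rw [hfactor, abs_mul, abs_exp]
  calc _ ≤ C * exp (-(1 + q) * z) * exp ((1 + ε) * z) :=
        mul_le_mul_of_nonneg_right h (exp_pos _).le
    _ = C * exp ((ε - q) * z) := by rw [mul_assoc, ← exp_add]; ring_nf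

lemma abs_integral_mul_exp_sub_le {ω : ℝ → ℝ} {a α β q M C c ε : ℝ} (hmeas : Measurable ω)
    (hbdd : ∀ z, |ω z| ≤ M) (hq : 0 < q) (hC : 0 ≤ C) (hc : 0 ≤ c)
    (hasymp : ∀ z ≥ c, |ω (z - a) - (α * z + β) * exp (-z)| ≤ C * exp (-(1 + q) * z))
    (hε : ε ∈ Ioo (-1 / 2) 0) :
    |(∫ z, ω (z - a) * exp ((1 + ε) * z)) - (α / ε ^ 2 - β / ε)|
      ≤ 2 * M * exp c + C / q + (|α| * c + |β|) * c := by
  obtain ⟨hε₁, hε₀⟩ := hε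
  have hM : 0 ≤ M := (abs_nonneg _).trans (hbdd 0)
  have h1ε : 0 < 1 + ε := by linarith
  have hεq : ε - q < 0 := by linarith
  set f : ℝ → ℝ := fun z => ω (z - a) * exp ((1 + ε) * z)
  set g : ℝ → ℝ := fun z => (α * z + β) * exp (ε * z)
  have hf_meas : Measurable f := by fun_prop
  have hf : ∀ z, |f z| ≤ M * exp ((1 + ε) * z) := fun z => by
    rw [abs_mul, abs_exp]
    exact mul_le_mul_of_nonneg_right (hbdd _) (exp_pos _).le
  have hfg : ∀ z ∈ Ioi c, |f z - g z| ≤ C * exp ((ε - q) * z) := fun z hz =>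
    abs_mul_exp_sub_linear_mul_exp_le (hasymp z (le_of_lt hz))
  have hf_Iic : IntegrableOn f (Iic c) :=
    ((integrableOn_exp_mul_Iic h1ε c).const_mul M).mono' hf_meas.aestronglyMeasurable.restrict
      (ae_of_all _ fun z => (norm_eq_abs _).trans_le (hf z))
  have hfg_Ioi : IntegrableOn (fun z => f z - g z) (Ioi c) :=
    ((integrableOn_exp_mul_Ioi hεq c).const_mul C).mono' (by fun_prop)
      (ae_restrict_of_forall_mem measurableSet_Ioi fun z hz => (norm_eq_abs _).trans_le (hfg z hz))
  have hA : |∫ z in Iic c, f z| ≤ 2 * M * exp c := by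
    refine (abs_setIntegral_le_mul_setIntegral_exp measurableSet_Iic
      (integrableOn_exp_mul_Iic h1ε c) fun z _ => hf z).trans ?_
    rw [integral_exp_mul_Iic h1ε, mul_div_assoc', div_le_iff₀ h1ε]
    have : exp ((1 + ε) * c) ≤ exp c := exp_le_exp.2 (by nlinarith)
    nlinarith [mul_le_mul_of_nonneg_left this hM, mul_nonneg (mul_nonneg hM (exp_pos c).le)
      (show 0 ≤ 1 + 2 * ε by linarith)]
  have hB : |∫ z in Ioi c, (f z - g z)| ≤ C / q := by
    refine (abs_setIntegral_le_mul_setIntegral_exp measurableSet_Ioi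
      (integrableOn_exp_mul_Ioi hεq c) hfg).trans ?_
    rw [integral_exp_mul_Ioi hεq, neg_div, ← div_neg, neg_sub, mul_div_assoc']
    have : exp ((ε - q) * c) ≤ 1 := exp_le_one_iff.2 (by nlinarith)
    rw [div_le_div_iff₀ (by linarith) hq]
    nlinarith [mul_le_mul_of_nonneg_right (mul_le_mul_of_nonneg_left this hC) hq.le,
      mul_nonneg hC (neg_nonneg.2 hε₀.le)]
  have hD := abs_setIntegral_Ioc_linear_mul_exp_le hε₀.le α β hc
  rw [← integral_Ioi_zero_linear_mul_exp hε₀ α β, integral_sub_setIntegral_Ioi_eq hc hf_Iic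
    hfg_Ioi (integrableOn_linear_mul_exp_Ioi hε₀ α β 0)]
  calc _ ≤ |(∫ z in Iic c, f z) + ∫ z in Ioi c, (f z - g z)| + |∫ z in Ioc 0 c, g z| :=
        abs_sub _ _
    _ ≤ _ := by linarith [abs_add_le (∫ z in Iic c, f z) (∫ z in Ioi c, (f z - g z))]

theorem stmt_11_general (ω : ℝ → ℝ) (a α β q M : ℝ) (hq : 0 < q)
    (hmeas : Measurable ω)
    (hbdd : ∀ z, |ω z| ≤ M)
    (hasymp : ∃ C z₀ : ℝ, ∀ z ≥ z₀,
      |ω (z - a) - (α * z + β) * Real.exp (-z)| ≤ C * Real.exp (-(1 + q) * z)) :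
    (fun ε : ℝ =>
        (∫ z : ℝ, ω (z - a) * Real.exp ((1 + ε) * z)) - (α / ε ^ 2 - β / ε))
      =O[nhdsWithin 0 (Set.Iio 0)] fun _ : ℝ => (1 : ℝ) := by
  obtain ⟨C, z₀, hC⟩ := hasymp
  set c := max z₀ 0
  have hc : ∀ z ≥ c, |ω (z - a) - (α * z + β) * exp (-z)| ≤ C * exp (-(1 + q) * z) :=
    fun z hz => hC z ((le_max_left _ _).trans hz)
  have hC₀ : 0 ≤ C := nonneg_of_mul_nonneg_left ((abs_nonneg _).trans (hc c le_rfl)) (exp_pos _)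
  refine IsBigO.of_bound (2 * M * exp c + C / q + (|α| * c + |β|) * c) ?_
  filter_upwards [Ioo_mem_nhdsLT (show (-1 / 2 : ℝ) < 0 by norm_num)] with ε hε
  rw [norm_one, mul_one, norm_eq_abs]
  exact abs_integral_mul_exp_sub_le hmeas hbdd hq hC₀ (le_max_right _ _) hc hε

theorem stmt_11 (ω : ℝ → ℝ) (a α β q M : ℝ) (hα : 0 < α) (hq : 0 < q)
    (hmeas : Measurable ω)
    (hbdd : ∀ z, |ω z| ≤ M)
    (hlim1 : Tendsto ω atBot (nhds 1))
    (hasymp : ∃ C z₀ : ℝ, ∀ z ≥ z₀,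
      |ω (z - a) - (α * z + β) * Real.exp (-z)| ≤ C * Real.exp (-(1 + q) * z)) :
    (fun ε : ℝ =>
        (∫ z : ℝ, ω (z - a) * Real.exp ((1 + ε) * z)) - (α / ε ^ 2 - β / ε))
      =O[nhdsWithin 0 (Set.Iio 0)] fun _ : ℝ => (1 : ℝ) :=
  stmt_11_general ω a α β q M hq hmeas hbdd hasymp
end

section
/- Let φ : ℝ → (0,1] be positive, decreasing, with φ(x) ~ A₀ x e^{−x} as x → +∞ (A₀ > 0), and suppose h : ℝ × [t₀,∞) → [0,1] satisfies |h(σ_t + x, t) − φ(x)| ≤ C(1 + |x|³)e^{−x}/t for x ≤ t^{γ/6}, |h(σ_t+x,t) − φ(x)| ≤ C x e^{−x} for x > t^{γ/6}, and |h(σ_t+x,t) − φ(x)| ≤ C/t for x ≤ 0, where γ ∈ (0, 1/2]. Then there exist C' > 0 and t₁ such that for all t > t₁ and all r ∈ [0.01, 1.99], |∫ e^{rx} h(σ_t+x,t)² dx − ∫ e^{rx} φ(x)² dx| ≤ C'/t. -/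
/-!
Write `u x = h (σ t + x) t` and factor `u² - φ² = (u - φ) (u + φ)` with
`|u + φ| ≤ 2 |φ| + |u - φ|`. For `x ≤ 0` the error `C / t` is integrated against `e^{rx}`,
`r ≥ ε`. For `x ≥ 0` both `φ` and `u - φ` are `O((1 + x)³ e^{-x})`, so the integrand is
`O((1 + x)⁶ e^{(r - 2) x})`, integrable since `r ≤ 2 - ε`, and it carries a factor `1 / t` up
to `T = t^{γ/6}`. The remaining tail beyond `T` is `O(e^{-εT/2})`, which is `o(1 / t)`.
-/

open Real MeasureTheory Set Filter

open scoped Topology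

lemma abs_sq_sub_sq_le_mul {a b s D F : ℝ} (hs0 : 0 ≤ s) (hs1 : s ≤ 1) (hD : 0 ≤ D)
    (hab : |a - b| ≤ s * D) (hb : |b| ≤ F) : |a ^ 2 - b ^ 2| ≤ s * (D * (2 * F + D)) := by
  have hsum : |a + b| ≤ 2 * F + D := by
    calc |a + b| = |(a - b) + 2 * b| := by ring_nf
      _ ≤ |a - b| + 2 * |b| := by
        refine (abs_add_le _ _).trans ?_; rw [abs_mul, abs_two]
      _ ≤ 2 * F + D := by nlinarith
  calc |a ^ 2 - b ^ 2| = |a - b| * |a + b| := by rw [← abs_mul]; ring_nf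
    _ ≤ s * D * (2 * F + D) := mul_le_mul hab hsum (abs_nonneg _) (by positivity)
    _ = s * (D * (2 * F + D)) := by ring

lemma pow_mul_exp_neg_le {c y : ℝ} (n : ℕ) (hc : 0 < c) (hy : 0 ≤ y) :
    y ^ n * exp (-c * y) ≤ n.factorial / c ^ n := by
  have h := pow_div_factorial_le_exp _ (mul_nonneg hc.le hy) n
  rw [div_le_iff₀ (by positivity), mul_pow] at h
  rw [le_div_iff₀ (by positivity), neg_mul, exp_neg]
  calc y ^ n * (exp (c * y))⁻¹ * c ^ n = (c ^ n * y ^ n) * (exp (c * y))⁻¹ := by ring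
    _ ≤ exp (c * y) * n.factorial * (exp (c * y))⁻¹ := by gcongr
    _ = n.factorial := by field_simp

lemma one_add_pow_mul_exp_neg_le {ε y : ℝ} (n : ℕ) (hε : 0 < ε) (hy : 0 ≤ y) :
    (1 + y) ^ n * exp (-ε * y) ≤
      n.factorial / (ε / 2) ^ n * exp (ε / 2) * exp (-(ε / 2) * y) := by
  have h := pow_mul_exp_neg_le n (half_pos hε) (by linarith : 0 ≤ 1 + y)
  calc (1 + y) ^ n * exp (-ε * y)
      = (1 + y) ^ n * exp (-(ε / 2) * (1 + y)) * (exp (ε / 2) * exp (-(ε / 2) * y)) := by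
        rw [mul_assoc, ← exp_add, ← exp_add]; ring_nf
    _ ≤ n.factorial / (ε / 2) ^ n * (exp (ε / 2) * exp (-(ε / 2) * y)) := by gcongr
    _ = _ := by ring

lemma exp_mul_abs_sq_sub_sq_le_of_nonpos {ε r x a b s C : ℝ} (hr : ε ≤ r) (hx : x ≤ 0)
    (hs0 : 0 ≤ s) (hs1 : s ≤ 1) (hC : 0 ≤ C) (hab : |a - b| ≤ s * C) (hb : |b| ≤ 1) :
    exp (r * x) * |a ^ 2 - b ^ 2| ≤ s * (C * (2 + C)) * exp (ε * x) := by
  have hexp : exp (r * x) ≤ exp (ε * x) := exp_le_exp.2 (by nlinarith)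
  have hsq := abs_sq_sub_sq_le_mul hs0 hs1 hC hab hb
  calc exp (r * x) * |a ^ 2 - b ^ 2| ≤ exp (ε * x) * (s * (C * (2 * 1 + C))) :=
        mul_le_mul hexp hsq (abs_nonneg _) (exp_pos _).le
    _ = s * (C * (2 + C)) * exp (ε * x) := by ring

lemma exp_mul_abs_sq_sub_sq_le_of_nonneg {ε r x a b s B C : ℝ} (hr : r ≤ 2 - ε) (hx : 0 ≤ x)
    (hs0 : 0 ≤ s) (hs1 : s ≤ 1) (hB : 0 ≤ B) (hC : 0 ≤ C)
    (hab : |a - b| ≤ s * (C * (1 + x) ^ 3 * exp (-x)))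
    (hb : |b| ≤ B * (1 + x) * exp (-x)) :
    exp (r * x) * |a ^ 2 - b ^ 2| ≤ s * (C * (2 * B + C)) * ((1 + x) ^ 6 * exp (-ε * x)) := by
  have hb3 : |b| ≤ B * (1 + x) ^ 3 * exp (-x) :=
    hb.trans (by gcongr; exact le_self_pow₀ (by linarith) (by norm_num))
  have hsq := abs_sq_sub_sq_le_mul hs0 hs1 (by positivity) hab hb3
  have hexp : exp (r * x) ≤ exp ((2 - ε) * x) := exp_le_exp.2 (by nlinarith)
  calc exp (r * x) * |a ^ 2 - b ^ 2|
      ≤ exp ((2 - ε) * x) * (s * (C * (1 + x) ^ 3 * exp (-x) *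
          (2 * (B * (1 + x) ^ 3 * exp (-x)) + C * (1 + x) ^ 3 * exp (-x)))) :=
        mul_le_mul hexp hsq (abs_nonneg _) (exp_pos _).le
    _ = s * (C * (2 * B + C)) * ((1 + x) ^ 6 * (exp ((2 - ε) * x) * exp (-x) * exp (-x))) := by
        ring
    _ = s * (C * (2 * B + C)) * ((1 + x) ^ 6 * exp (-ε * x)) := by
        rw [← exp_add, ← exp_add]; ring_nf

lemma exists_exp_mul_abs_sq_sub_sq_le {ε B C : ℝ} (hε : 0 < ε) (hB : 0 ≤ B) (hC : 0 < C) :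
    ∃ M > 0, ∀ r ∈ Icc ε (2 - ε), ∀ t ≥ (1 : ℝ), ∀ T x a b : ℝ, |b| ≤ 1 →
      (0 ≤ x → |b| ≤ B * (1 + x) * exp (-x)) → (x ≤ 0 → |a - b| ≤ C / t) →
      (x ≤ T → |a - b| ≤ C * (1 + |x| ^ 3) * exp (-x) / t) →
      (T < x → |a - b| ≤ C * x * exp (-x)) →
      exp (r * x) * |a ^ 2 - b ^ 2| ≤
        M * (t⁻¹ * exp (-(ε / 2) * |x|) + (Ioi T).indicator (fun y ↦ exp (-(ε / 2) * y)) x) := by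
  set K := (6 : ℕ).factorial / (ε / 2) ^ 6 * exp (ε / 2)
  set M := C * (2 + C) + C * (2 * B + C) * K
  have hM₁ : C * (2 + C) ≤ M := le_add_of_nonneg_right (by positivity)
  have hM₂ : C * (2 * B + C) * K ≤ M := le_add_of_nonneg_left (by positivity)
  have hM0 : 0 < M := by positivity
  refine ⟨M, hM0, ?_⟩
  intro r hr t ht T x a b hb1 hbB hneg hmid htail
  set w := exp (-(ε / 2) * |x|) with hw
  set ι := (Ioi T).indicator (fun y ↦ exp (-(ε / 2) * y)) x with hι
  have hw0 : 0 ≤ w := (exp_pos _).le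
  have ht0 : 0 ≤ t⁻¹ := inv_nonneg.2 (by linarith)
  have ht1 : t⁻¹ ≤ 1 := inv_le_one_of_one_le₀ ht
  have hMw : 0 ≤ M * (t⁻¹ * w) := mul_nonneg hM0.le (mul_nonneg ht0 hw0)
  have hMι : 0 ≤ M * ι := mul_nonneg hM0.le (indicator_nonneg (fun _ _ ↦ (exp_pos _).le) x)
  rcases le_or_gt x 0 with hx | hx
  · have hexp : exp (ε * x) ≤ w := by
      rw [hw, abs_of_nonpos hx]; exact exp_le_exp.2 (by nlinarith)
    calc exp (r * x) * |a ^ 2 - b ^ 2| ≤ t⁻¹ * (C * (2 + C)) * exp (ε * x) :=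
          exp_mul_abs_sq_sub_sq_le_of_nonpos hr.1 hx ht0 ht1 hC.le
            (by rw [← div_eq_inv_mul]; exact hneg hx) hb1
      _ ≤ M * (t⁻¹ * w) := by nlinarith [mul_le_mul hM₁ hexp (exp_pos _).le hM0.le]
      _ ≤ M * (t⁻¹ * w + ι) := by linarith
  have hweight : (1 + x) ^ 6 * exp (-ε * x) ≤ K * w := by
    rw [hw, abs_of_pos hx]; exact one_add_pow_mul_exp_neg_le 6 hε hx.le
  rcases le_or_gt x T with hxT | hTx
  · have hab : |a - b| ≤ t⁻¹ * (C * (1 + x) ^ 3 * exp (-x)) := by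
      refine (hmid hxT).trans ?_
      rw [abs_of_pos hx, div_eq_inv_mul]
      gcongr
      nlinarith [sq_nonneg x]
    calc exp (r * x) * |a ^ 2 - b ^ 2|
        ≤ t⁻¹ * (C * (2 * B + C)) * ((1 + x) ^ 6 * exp (-ε * x)) :=
          exp_mul_abs_sq_sub_sq_le_of_nonneg hr.2 hx.le ht0 ht1 hB hC.le hab (hbB hx.le)
      _ ≤ t⁻¹ * (C * (2 * B + C)) * (K * w) := by gcongr
      _ ≤ M * (t⁻¹ * w) := by nlinarith [mul_le_mul_of_nonneg_right hM₂ (mul_nonneg ht0 hw0)]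
      _ ≤ M * (t⁻¹ * w + ι) := by linarith
  · have hab : |a - b| ≤ 1 * (C * (1 + x) ^ 3 * exp (-x)) := by
      refine (htail hTx).trans ?_
      rw [one_mul]
      gcongr
      nlinarith [sq_nonneg x]
    have hιw : ι = w := by rw [hι, hw, indicator_of_mem (mem_Ioi.2 hTx), abs_of_pos hx]
    calc exp (r * x) * |a ^ 2 - b ^ 2|
        ≤ 1 * (C * (2 * B + C)) * ((1 + x) ^ 6 * exp (-ε * x)) :=
          exp_mul_abs_sq_sub_sq_le_of_nonneg hr.2 hx.le zero_le_one le_rfl hB hC.le hab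
            (hbB hx.le)
      _ ≤ 1 * (C * (2 * B + C)) * (K * w) := by gcongr
      _ ≤ M * ι := by rw [hιw, one_mul, ← mul_assoc]; exact mul_le_mul_of_nonneg_right hM₂ hw0
      _ ≤ M * (t⁻¹ * w + ι) := by linarith

lemma integrable_exp_neg_mul_abs {c : ℝ} (hc : 0 < c) :
    Integrable fun x : ℝ ↦ exp (-c * |x|) := by
  rw [← integrableOn_univ, ← Iic_union_Ioi (a := 0)]
  refine IntegrableOn.union ?_ ?_
  · refine (integrableOn_exp_mul_Iic hc 0).congr_fun (fun x hx ↦ ?_) measurableSet_Iic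
    rw [abs_of_nonpos hx]; ring_nf
  · refine (integrableOn_exp_mul_Ioi (neg_neg_of_pos hc) 0).congr_fun (fun x hx ↦ ?_)
      measurableSet_Ioi
    rw [abs_of_pos hx]

lemma integral_exp_neg_mul_abs {c : ℝ} (hc : 0 < c) :
    ∫ x : ℝ, exp (-c * |x|) = 2 / c := by
  rw [integral_comp_abs (f := fun x ↦ exp (-c * x)),
    integral_exp_mul_Ioi (neg_neg_of_pos hc)]
  field_simp
  simp

lemma norm_integral_sub_le_of_norm_sub_le {α E : Type*} [MeasurableSpace α] {μ : Measure α}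
    [NormedAddCommGroup E] [NormedSpace ℝ E] {f g : α → E} {k : α → ℝ}
    (hf : AEStronglyMeasurable f μ) (hg : AEStronglyMeasurable g μ) (hk : Integrable k μ)
    (hfg : ∀ᵐ x ∂μ, ‖f x - g x‖ ≤ k x) : ‖∫ x, f x ∂μ - ∫ x, g x ∂μ‖ ≤ ∫ x, k x ∂μ := by
  have hfg' : Integrable (f - g) μ := hk.mono' (hf.sub hg) hfg
  by_cases hgi : Integrable g μ
  · have hf' : Integrable f μ := by simpa using hfg'.add hgi
    rw [← integral_sub hf' hgi]
    exact (norm_integral_le_integral_norm _).trans (integral_mono_ae hfg'.norm hk hfg)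
  · -- neither `f` nor `g` is integrable, so both integrals are `0`
    have hfi : ¬ Integrable f μ := fun hfi ↦ hgi (by simpa using hfi.sub hfg')
    rw [integral_undef hfi, integral_undef hgi, sub_zero, norm_zero]
    exact integral_nonneg_of_ae (hfg.mono fun x hx ↦ (norm_nonneg _).trans hx)

lemma exists_abs_integral_exp_mul_sq_sub_le {ε B C : ℝ} (hε : 0 < ε) (hB : 0 ≤ B) (hC : 0 < C) :
    ∃ K > 0, ∀ r ∈ Icc ε (2 - ε), ∀ t ≥ (1 : ℝ), ∀ (T : ℝ) (u φ : ℝ → ℝ),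
      Measurable u → Measurable φ → (∀ x, |φ x| ≤ 1) →
      (∀ x, 0 ≤ x → |φ x| ≤ B * (1 + x) * exp (-x)) → (∀ x ≤ 0, |u x - φ x| ≤ C / t) →
      (∀ x ≤ T, |u x - φ x| ≤ C * (1 + |x| ^ 3) * exp (-x) / t) →
      (∀ x, T < x → |u x - φ x| ≤ C * x * exp (-x)) →
      |(∫ x, exp (r * x) * u x ^ 2) - ∫ x, exp (r * x) * φ x ^ 2| ≤
        K * (t⁻¹ + exp (-(ε / 2) * T)) := by
  obtain ⟨M, hM, hpt⟩ := exists_exp_mul_abs_sq_sub_sq_le hε hB hC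
  have hc : 0 < ε / 2 := half_pos hε
  refine ⟨4 * M / ε, by positivity, ?_⟩
  intro r hr t ht T u φ hu hφ hφ1 hφB hneg hmid htail
  have hk₁ : Integrable fun x : ℝ ↦ t⁻¹ * exp (-(ε / 2) * |x|) :=
    (integrable_exp_neg_mul_abs hc).const_mul _
  have hk₂ : Integrable ((Ioi T).indicator fun y ↦ exp (-(ε / 2) * y)) :=
    (integrableOn_exp_mul_Ioi (neg_neg_of_pos hc) T).integrable_indicator measurableSet_Ioi
  have hbound := norm_integral_sub_le_of_norm_sub_le (μ := volume)
    (f := fun x ↦ exp (r * x) * u x ^ 2) (g := fun x ↦ exp (r * x) * φ x ^ 2)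
    (k := fun x ↦
      M * (t⁻¹ * exp (-(ε / 2) * |x|) + (Ioi T).indicator (fun y ↦ exp (-(ε / 2) * y)) x))
    (by fun_prop) (by fun_prop) ((hk₁.add hk₂).const_mul M) (ae_of_all _ fun x ↦ by
      rw [Real.norm_eq_abs, ← mul_sub, abs_mul, abs_of_pos (exp_pos _)]
      exact hpt r hr t ht T x (u x) (φ x) (hφ1 x) (hφB x) (hneg x) (hmid x) (htail x))
  rw [Real.norm_eq_abs] at hbound
  refine hbound.trans ?_
  rw [integral_const_mul, integral_add hk₁ hk₂, integral_const_mul, integral_exp_neg_mul_abs hc,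
    integral_indicator measurableSet_Ioi, integral_exp_mul_Ioi (neg_neg_of_pos hc)]
  field_simp
  nlinarith [mul_pos (by linarith : (0 : ℝ) < t) (exp_pos (-(ε * T / 2)))]

lemma tendsto_mul_exp_neg_mul_rpow_atTop_nhds_zero {a c : ℝ} (ha : 0 < a) (hc : 0 < c) :
    Tendsto (fun t ↦ t * exp (-c * t ^ a)) atTop (𝓝 0) := by
  have h := (tendsto_rpow_mul_exp_neg_mul_atTop_nhds_zero a⁻¹ c hc).comp
    (tendsto_rpow_atTop ha)
  refine h.congr' ?_
  filter_upwards [eventually_ge_atTop 0] with t ht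
  simp [← rpow_mul ht, mul_inv_cancel₀ ha.ne']

lemma exists_le_mul_one_add_mul_exp_neg {φ : ℝ → ℝ} {A₀ : ℝ} (hA₀ : 0 < A₀)
    (hφ1 : ∀ x, φ x ≤ 1)
    (hφ : Tendsto (fun x ↦ φ x / (A₀ * x * exp (-x))) atTop (𝓝 1)) :
    ∃ B ≥ 0, ∀ x, 0 ≤ x → φ x ≤ B * (1 + x) * exp (-x) := by
  obtain ⟨x₀, hx₀⟩ := eventually_atTop.1 (hφ.eventually_lt_const one_lt_two)
  set x₁ := max x₀ 1
  refine ⟨2 * A₀ + exp x₁, by positivity, fun x hx ↦ ?_⟩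
  rcases le_or_gt x₁ x with hx₁x | hxx₁
  · have hpos : 0 < A₀ * x * exp (-x) :=
      mul_pos (mul_pos hA₀ (lt_of_lt_of_le one_pos ((le_max_right _ _).trans hx₁x))) (exp_pos _)
    have := (div_lt_iff₀ hpos).1 (hx₀ x ((le_max_left _ _).trans hx₁x))
    have : 0 ≤ (2 * A₀ + exp x₁ * (1 + x)) * exp (-x) := by positivity
    nlinarith
  · calc φ x ≤ exp x₁ * exp (-x) := by
          rw [← exp_add]; exact (hφ1 x).trans (one_le_exp (by linarith))
      _ ≤ (2 * A₀ + exp x₁) * (1 + x) * exp (-x) := by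
          gcongr
          nlinarith [exp_pos x₁]

theorem stmt_19_general (φ : ℝ → ℝ) (A₀ : ℝ) (hA₀ : 0 < A₀)
    (hφpos : ∀ x, 0 < φ x) (hφle : ∀ x, φ x ≤ 1)
    (hφdec : StrictAnti φ)
    (hφasymp : Tendsto (fun x => φ x / (A₀ * x * Real.exp (-x))) atTop (nhds 1))
    (h : ℝ → ℝ → ℝ) (σ : ℝ → ℝ) (t₀ C γ : ℝ) (hC : 0 < C)
    (hγ : γ ∈ Set.Ioc (0:ℝ) (1/2))
    (hmeas : ∀ t, Measurable fun x => h x t)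
    (hbound1 : ∀ t ≥ t₀, ∀ x ≤ t ^ (γ / 6),
      |h (σ t + x) t - φ x| ≤ C * (1 + |x| ^ 3) * Real.exp (-x) / t)
    (hbound2 : ∀ t ≥ t₀, ∀ x, t ^ (γ / 6) < x →
      |h (σ t + x) t - φ x| ≤ C * x * Real.exp (-x))
    (hbound3 : ∀ t ≥ t₀, ∀ x ≤ (0:ℝ), |h (σ t + x) t - φ x| ≤ C / t) :
    ∃ C' > (0:ℝ), ∃ t₁ : ℝ, ∀ t > t₁, ∀ r ∈ Set.Icc (0.01:ℝ) 1.99,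
      |(∫ x : ℝ, Real.exp (r * x) * (h (σ t + x) t) ^ 2)
          - ∫ x : ℝ, Real.exp (r * x) * (φ x) ^ 2| ≤ C' / t := by
  obtain ⟨B, hB, hφB⟩ := exists_le_mul_one_add_mul_exp_neg hA₀ hφle hφasymp
  obtain ⟨K, hK, hint⟩ := exists_abs_integral_exp_mul_sq_sub_le (ε := 0.01) (by norm_num) hB hC
  have hdecay : ∀ᶠ t in atTop, exp (-(0.01 / 2) * t ^ (γ / 6)) ≤ t⁻¹ := by
    have hγ6 : 0 < γ / 6 := by linarith [hγ.1]
    filter_upwards [(tendsto_mul_exp_neg_mul_rpow_atTop_nhds_zero hγ6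
      (by norm_num : (0 : ℝ) < 0.01 / 2)).eventually_lt_const one_pos,
      eventually_gt_atTop 0] with t hlt hpos
    rw [← one_div, le_div_iff₀ hpos]
    linarith
  obtain ⟨t₁, ht₁⟩ := eventually_atTop.1 (hdecay.and (eventually_ge_atTop (max t₀ 1)))
  refine ⟨2 * K, by positivity, t₁, fun t ht r hr ↦ ?_⟩
  obtain ⟨hexp, htt⟩ := ht₁ t ht.le
  have ht₀ : t₀ ≤ t := le_of_max_le_left htt
  calc _ ≤ K * (t⁻¹ + exp (-(0.01 / 2) * t ^ (γ / 6))) :=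
        hint r (by norm_num at hr ⊢; exact hr) t (le_of_max_le_right htt) (t ^ (γ / 6))
          (fun x ↦ h (σ t + x) t) φ ((hmeas t).comp (measurable_const_add _))
          hφdec.antitone.measurable (fun x ↦ abs_le.2 ⟨by linarith [hφpos x], hφle x⟩)
          (fun x hx ↦ (abs_of_pos (hφpos x)).trans_le (hφB x hx))
          (hbound3 t ht₀) (hbound1 t ht₀) (hbound2 t ht₀)
    _ ≤ K * (t⁻¹ + t⁻¹) := by gcongr
    _ = 2 * K / t := by ring

theorem stmt_19 (φ : ℝ → ℝ) (A₀ : ℝ) (hA₀ : 0 < A₀)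
    (hφpos : ∀ x, 0 < φ x) (hφle : ∀ x, φ x ≤ 1)
    (hφdec : StrictAnti φ)
    (hφasymp : Tendsto (fun x => φ x / (A₀ * x * Real.exp (-x))) atTop (nhds 1))
    (h : ℝ → ℝ → ℝ) (σ : ℝ → ℝ) (t₀ C γ : ℝ) (hC : 0 < C)
    (hγ : γ ∈ Set.Ioc (0:ℝ) (1/2))
    (hmem : ∀ x t, t₀ ≤ t → h x t ∈ Set.Icc (0:ℝ) 1)
    (hmeas : ∀ t, Measurable fun x => h x t)
    (hbound1 : ∀ t ≥ t₀, ∀ x ≤ t ^ (γ / 6),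
      |h (σ t + x) t - φ x| ≤ C * (1 + |x| ^ 3) * Real.exp (-x) / t)
    (hbound2 : ∀ t ≥ t₀, ∀ x, t ^ (γ / 6) < x →
      |h (σ t + x) t - φ x| ≤ C * x * Real.exp (-x))
    (hbound3 : ∀ t ≥ t₀, ∀ x ≤ (0:ℝ), |h (σ t + x) t - φ x| ≤ C / t) :
    ∃ C' > (0:ℝ), ∃ t₁ : ℝ, ∀ t > t₁, ∀ r ∈ Set.Icc (0.01:ℝ) 1.99,
      |(∫ x : ℝ, Real.exp (r * x) * (h (σ t + x) t) ^ 2)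
          - ∫ x : ℝ, Real.exp (r * x) * (φ x) ^ 2| ≤ C' / t :=
  stmt_19_general φ A₀ hA₀ hφpos hφle hφdec hφasymp h σ t₀ C γ hC hγ hmeas hbound1 hbound2 hbound3
end
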